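/- In ℤ[[t]], the identity ∏_{m≥1}(1-t^m)^{s(m)} = ∏_{m≥1}(1-t^m)^{s'(m)} with all but finitely many s(m), s'(m) zero implies s(m) = s'(m) for all m. -/

import Mathlib

/-- The unit `1 - tᵐ` of `ℤ[[t]]` (for `m ≥ 1`); for `m = 0` we set it to `1`. -/
noncomputable def binomUnit (m : ℕ) : (PowerSeries ℤ)ˣ := by
  classical
  exact if h : IsUnit ((1 : PowerSeries ℤ) - PowerSeries.X ^ m) then h.unit else 1

/-!
Subtracting exponents, it suffices to show that `∏ (1 - tᵐ) ^ d(m) = 1` with `d 0 = 0` forces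
`d = 0`. If `n` is the least `m` with `d m ≠ 0`, work modulo `tⁿ⁺¹`: every factor with `m > n`
becomes `1`, and since `(tⁿ)² ≡ 0` the remaining factor is `(1 - tⁿ) ^ d(n) ≡ 1 - d(n) tⁿ`.
Hence `d(n) tⁿ ≡ 0`, i.e. `d(n) = 0`.
-/

open PowerSeries

theorem Units.val_zpow_eq_one_sub_mul_of_sq_eq_zero {R : Type*} [CommRing R] {u : Rˣ} {ε : R}
    (hu : (u : R) = 1 - ε) (hε : ε ^ 2 = 0) (k : ℤ) : ((u ^ k : Rˣ) : R) = 1 - k * ε := by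
  have hinv : ((u⁻¹ : Rˣ) : R) = 1 + ε :=
    Units.inv_eq_of_mul_eq_one_right (by rw [hu]; linear_combination -hε)
  induction k using Int.induction_on with
  | zero => simp
  | succ k ih =>
    rw [zpow_add_one, Units.val_mul, ih, hu]
    push_cast
    linear_combination (k : R) * hε
  | pred k ih =>
    rw [zpow_sub_one, Units.val_mul, ih, hinv]
    push_cast
    linear_combination (k : R) * hε

theorem val_binomUnit {m : ℕ} (hm : m ≠ 0) : (binomUnit m : ℤ⟦X⟧) = 1 - X ^ m := by
  have hunit : IsUnit ((1 : ℤ⟦X⟧) - X ^ m) := by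
    simp [isUnit_iff_constantCoeff, zero_pow hm]
  rw [binomUnit, dif_pos hunit, hunit.unit_spec]

theorem prod_binomUnit_zpow_add (s t : ℕ →₀ ℤ) :
    ((s + t).prod fun m k => binomUnit m ^ k) =
      (s.prod fun m k => binomUnit m ^ k) * t.prod fun m k => binomUnit m ^ k :=
  Finsupp.prod_add_index' (fun _ => zpow_zero _) fun _ _ _ => zpow_add _ _ _

theorem mk_binomUnit_zpow {n m : ℕ} (hm : m ≠ 0) (hnm : n ≤ m) (k : ℤ) :
    Ideal.Quotient.mk (Ideal.span {(X : ℤ⟦X⟧) ^ (n + 1)}) (binomUnit m ^ k : ℤ⟦X⟧ˣ) =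
      1 - k * Ideal.Quotient.mk (Ideal.span {(X : ℤ⟦X⟧) ^ (n + 1)}) (X ^ m) := by
  set I := Ideal.span {(X : ℤ⟦X⟧) ^ (n + 1)}
  set π := Ideal.Quotient.mk I
  have hsq : π (X ^ m) ^ 2 = 0 := by
    rw [← map_pow, ← pow_mul, Ideal.Quotient.eq_zero_iff_mem, Ideal.mem_span_singleton]
    exact pow_dvd_pow _ (by omega)
  have hu : ((Units.map (π : ℤ⟦X⟧ →* ℤ⟦X⟧ ⧸ I) (binomUnit m) : _) : ℤ⟦X⟧ ⧸ I) =
      1 - π (X ^ m) := by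
    simp [val_binomUnit hm]
  rw [← Units.val_zpow_eq_one_sub_mul_of_sq_eq_zero hu hsq, ← map_zpow, Units.coe_map,
    MonoidHom.coe_coe]

theorem eq_zero_of_prod_binomUnit_zpow_eq_one {d : ℕ →₀ ℤ} (hd0 : d 0 = 0)
    (hd : (d.prod fun m k => binomUnit m ^ k) = 1) : d = 0 := by
  by_contra hne
  have hsupp := Finsupp.support_nonempty_iff.mpr hne
  set n := d.support.min' hsupp
  have hn : n ∈ d.support := d.support.min'_mem hsupp
  have hn0 : n ≠ 0 := by
    rintro h
    rw [Finsupp.mem_support_iff, h] at hn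
    exact hn hd0
  set π := Ideal.Quotient.mk (Ideal.span {(X : ℤ⟦X⟧) ^ (n + 1)})
  have hprod : π (d.prod fun m k => binomUnit m ^ k : ℤ⟦X⟧ˣ) = 1 - d n * π (X ^ n) := by
    rw [Finsupp.prod, Units.coe_prod, map_prod, ← Finset.mul_prod_erase _ _ hn,
      mk_binomUnit_zpow hn0 le_rfl, Finset.prod_eq_one, mul_one]
    intro m hm
    have hnm : n < m :=
      lt_of_le_of_ne (d.support.min'_le m (Finset.mem_of_mem_erase hm))
        (Finset.ne_of_mem_erase hm).symm
    rw [mk_binomUnit_zpow (by omega) hnm.le, Ideal.Quotient.eq_zero_iff_mem.mpr, mul_zero,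
      sub_zero]
    exact Ideal.mem_span_singleton.mpr (pow_dvd_pow _ hnm)
  have hdvd : X ^ (n + 1) ∣ (d n : ℤ⟦X⟧) * X ^ n := by
    rw [← Ideal.mem_span_singleton, ← Ideal.Quotient.eq_zero_iff_mem, map_mul, map_intCast]
    rw [hd, Units.val_one, map_one] at hprod
    linear_combination hprod
  have hcoeff := (X_pow_dvd_iff.mp hdvd) n n.lt_succ_self
  rw [← zsmul_eq_mul, map_zsmul, coeff_X_pow_self, smul_eq_mul, mul_one] at hcoeff
  exact Finsupp.mem_support_iff.mp hn hcoeff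

/-- If `∏_{m≥1}(1-tᵐ)^{s(m)} = ∏_{m≥1}(1-tᵐ)^{s'(m)}` in `ℤ[[t]]` with finitely supported
integer exponents (negative exponents being powers of the inverse of the unit `1 - tᵐ`),
then `s = s'`. -/
theorem binomial_factorization_exponents_unique (s s' : ℕ →₀ ℤ)
    (hs : s 0 = 0) (hs' : s' 0 = 0)
    (h : (s.prod fun m k => binomUnit m ^ k) = s'.prod fun m k => binomUnit m ^ k) :
    s = s' := by
  have hdiff : ((s - s').prod fun m k => binomUnit m ^ k) = 1 := by
    have := prod_binomUnit_zpow_add (s - s') s'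
    rwa [sub_add_cancel, h, right_eq_mul] at this
  exact sub_eq_zero.mp (eq_zero_of_prod_binomUnit_zpow_eq_one (by simp [hs, hs']) hdiff)
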